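/- arXiv:1308.0916 — 6 statements merged into one kernel-verified Lean document; each statement's English description precedes it below -/
import Mathlib

section
/- For any real number r with 0 < r < 1 and any positive integer k, the sum ∑_{t=0}^{k-1} r^{k-t-1} · 1/(t+1) is at most 1/((1-r)^2 · k). -/
theorem stmt_1 (r : ℝ) (hr0 : 0 < r) (hr1 : r < 1) (k : ℕ) (hk : 1 ≤ k) :
    (∑ t ∈ Finset.range k, r ^ (k - t - 1) * (1 / (t + 1 : ℝ))) ≤
      1 / ((1 - r) ^ 2 * k) := by
  have hr1' : (0:ℝ) < 1 - r := by linarith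
  have hk0 : (0:ℝ) < k := by exact_mod_cast hk
  have hnorm : ‖r‖ < 1 := by rw [Real.norm_eq_abs, abs_of_pos hr0]; exact hr1
  -- termwise bound
  have step1 : ∀ t ∈ Finset.range k,
      r ^ (k - t - 1) * (1 / (t + 1 : ℝ)) ≤ r ^ (k - t - 1) * (((k - t : ℕ) : ℝ) / k) := by
    intro t ht
    rw [Finset.mem_range] at ht
    apply mul_le_mul_of_nonneg_left _ (le_of_lt (pow_pos hr0 _))
    rw [div_le_div_iff₀ (by positivity) hk0]
    have h1 : k ≤ (t + 1) * (k - t) := by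
      have h2 : 1 ≤ k - t := by omega
      have h3 : k - t + t = k := by omega
      nlinarith
    have h1' : (k : ℝ) ≤ ((t : ℝ) + 1) * ((k - t : ℕ) : ℝ) := by exact_mod_cast h1
    linarith
  -- reflect the sum
  have step2 : (∑ t ∈ Finset.range k, r ^ (k - t - 1) * (((k - t : ℕ) : ℝ) / k))
      = ∑ j ∈ Finset.range k, ((j : ℝ) + 1) * r ^ j / k := by
    rw [← Finset.sum_range_reflect (fun t => r ^ (k - t - 1) * (((k - t : ℕ) : ℝ) / k)) k]
    apply Finset.sum_congr rfl
    intro j hj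
    rw [Finset.mem_range] at hj
    have e1 : k - (k - 1 - j) - 1 = j := by omega
    have e2 : k - (k - 1 - j) = j + 1 := by omega
    rw [e1, e2]
    push_cast
    ring
  -- bound partial sum by tsum
  have hsum1 : Summable (fun n : ℕ => (n : ℝ) * r ^ n) := by
    have := summable_pow_mul_geometric_of_norm_lt_one 1 hnorm (R := ℝ)
    exact this.congr (fun n => by simp)
  have hsum2 : Summable (fun n : ℕ => r ^ n) :=
    summable_geometric_of_lt_one hr0.le hr1
  have hsum3 : Summable (fun n : ℕ => ((n : ℝ) + 1) * r ^ n) :=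
    (hsum1.add hsum2).congr (fun n => by ring)
  have htsum : ∑' n : ℕ, ((n : ℝ) + 1) * r ^ n = 1 / (1 - r) ^ 2 := by
    have h : ∑' n : ℕ, ((n : ℝ) + 1) * r ^ n
        = (∑' n : ℕ, (n : ℝ) * r ^ n) + ∑' n : ℕ, r ^ n := by
      rw [← Summable.tsum_add hsum1 hsum2]
      exact tsum_congr (fun n => by ring)
    rw [h, tsum_coe_mul_geometric_of_norm_lt_one hnorm,
      tsum_geometric_of_lt_one hr0.le hr1]
    field_simp
    ring
  have step3 : ∑ j ∈ Finset.range k, ((j : ℝ) + 1) * r ^ j ≤ 1 / (1 - r) ^ 2 := by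
    rw [← htsum]
    exact Summable.sum_le_tsum _ (fun i _ => by positivity) hsum3
  calc (∑ t ∈ Finset.range k, r ^ (k - t - 1) * (1 / (t + 1 : ℝ)))
      ≤ ∑ t ∈ Finset.range k, r ^ (k - t - 1) * (((k - t : ℕ) : ℝ) / k) :=
        Finset.sum_le_sum step1
    _ = ∑ j ∈ Finset.range k, ((j : ℝ) + 1) * r ^ j / k := step2
    _ = (∑ j ∈ Finset.range k, ((j : ℝ) + 1) * r ^ j) / k := by
        rw [Finset.sum_div]
    _ ≤ (1 / (1 - r) ^ 2) / k := by
        exact div_le_div_of_nonneg_right step3 hk0.le |>.trans_eq rfl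
    _ = 1 / ((1 - r) ^ 2 * k) := by
        field_simp
end

section
/- Define β_k = k/(k+3) and a_t = 3/(t+3) for nonnegative integers k, t. For integers k ≥ 3 and 1 ≤ t ≤ k-2, define σ_2(k,t) = ∑_{j=0}^{t-1} a_{k-t-1+j} · (t-j) · ∏_{i=0}^{j-1} β_{k-t-1+i} (with the empty product equal to 1). Then σ_2(k,t) ≤ t+1. -/
/-! Since `aseq n = 1 - beta n`, the `j`-th term of `sigma2 k t` is `(t - j) (P j - P (j + 1))`,
where `P j` is the product of the first `j` factors `beta` used there. The `P j` decrease from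
`P 0 = 1` and stay nonnegative, so the sum is at most `t (P 0 - P t) ≤ t`. -/

noncomputable def beta (n : ℕ) : ℝ := n / (n + 3)

noncomputable def aseq (n : ℕ) : ℝ := 3 / (n + 3)

noncomputable def sigma2 (k t : ℕ) : ℝ :=
  ∑ j ∈ Finset.range t,
    aseq (k - t - 1 + j) * ((t : ℝ) - j) * ∏ i ∈ Finset.range j, beta (k - t - 1 + i)

open Finset

lemma beta_nonneg (n : ℕ) : 0 ≤ beta n := by
  unfold beta; positivity

lemma beta_le_one (n : ℕ) : beta n ≤ 1 := by
  unfold beta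
  rw [div_le_one (by positivity)]
  linarith

lemma aseq_eq_one_sub_beta (n : ℕ) : aseq n = 1 - beta n := by
  unfold aseq beta
  field_simp
  ring

lemma antitone_prod_range_beta (m : ℕ) : Antitone fun j ↦ ∏ i ∈ range j, beta (m + i) := by
  refine antitone_nat_of_succ_le fun j ↦ ?_
  rw [prod_range_succ]
  exact mul_le_of_le_one_right (prod_nonneg fun i _ ↦ beta_nonneg _) (beta_le_one _)

lemma sum_range_mul_sub_succ_le {f : ℕ → ℝ} (hf : Antitone f) (t : ℕ) (ht : 0 ≤ f t) :
    ∑ j ∈ range t, ((t : ℝ) - j) * (f j - f (j + 1)) ≤ t * f 0 :=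
  calc ∑ j ∈ range t, ((t : ℝ) - j) * (f j - f (j + 1))
      ≤ ∑ j ∈ range t, (t : ℝ) * (f j - f (j + 1)) := by
        gcongr with j
        · exact sub_nonneg.2 (hf j.le_succ)
        · exact sub_le_self _ j.cast_nonneg
    _ = t * (f 0 - f t) := by rw [← mul_sum, sum_range_sub']
    _ ≤ t * f 0 := by gcongr; exact sub_le_self _ ht

lemma sigma2_eq_sum_mul_sub_succ (k t : ℕ) :
    sigma2 k t = ∑ j ∈ range t, ((t : ℝ) - j) *
      (∏ i ∈ range j, beta (k - t - 1 + i) - ∏ i ∈ range (j + 1), beta (k - t - 1 + i)) := by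
  refine sum_congr rfl fun j _ ↦ ?_
  rw [prod_range_succ, aseq_eq_one_sub_beta]
  ring

lemma sigma2_le (k t : ℕ) : sigma2 k t ≤ t := by
  have h := sum_range_mul_sub_succ_le (antitone_prod_range_beta (k - t - 1)) t
    (prod_nonneg fun i _ ↦ beta_nonneg _)
  rw [← sigma2_eq_sum_mul_sub_succ, prod_range_zero, mul_one] at h
  exact h

theorem stmt_4_general (k t : ℕ) :
    sigma2 k t ≤ (t : ℝ) + 1 := by
  linarith [sigma2_le k t]

theorem stmt_4 (k t : ℕ) (hk : 3 ≤ k) (ht1 : 1 ≤ t) (ht2 : t ≤ k - 2) :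
    sigma2 k t ≤ (t : ℝ) + 1 :=
  stmt_4_general k t
end

section
/- Define β_k = k/(k+3) and a_t = 3/(t+3). For integers k ≥ 3 and 1 ≤ t ≤ k-2, with σ_2(k,t) = ∑_{j=0}^{t-1} a_{k-t-1+j} · (t-j) · ∏_{i=0}^{j-1} β_{k-t-1+i}, it holds that σ_2(k,t) ≥ t²/(k+2). -/
open Finset

theorem sum_range_sub_mul_sub_succ {R : Type*} [CommRing R] (f : ℕ → R) (t : ℕ) :
    ∑ j ∈ range t, ((t : R) - j) * (f j - f (j + 1)) =
      t * f 0 - ∑ j ∈ range t, f (j + 1) := by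
  induction t with
  | zero => simp
  | succ t ih =>
    have hsplit : ∀ j ∈ range t, (((t + 1 : ℕ) : R) - j) * (f j - f (j + 1)) =
        ((t : R) - j) * (f j - f (j + 1)) + (f j - f (j + 1)) := by
      intro j _
      push_cast
      ring
    rw [sum_range_succ, sum_congr rfl hsplit, sum_add_distrib, ih, sum_range_sub',
      sum_range_succ]
    push_cast
    ring

theorem beta_eq_one_sub_aseq (n : ℕ) : beta n = 1 - aseq n := by
  unfold beta aseq
  field_simp
  ring

theorem aseq_mul_prod_beta (m j : ℕ) :
    aseq (m + j) * ∏ i ∈ range j, beta (m + i) =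
      ∏ i ∈ range j, beta (m + i) - ∏ i ∈ range (j + 1), beta (m + i) := by
  rw [prod_range_succ, beta_eq_one_sub_aseq]
  ring

theorem prod_range_succ_beta (m j : ℕ) :
    ∏ i ∈ range (j + 1), beta (m + i) =
      m * (m + 1) * (m + 2) / (((m : ℝ) + j + 1) * (m + j + 2) * (m + j + 3)) := by
  induction j with
  | zero =>
    simp only [zero_add, prod_range_one, add_zero, CharP.cast_eq_zero, beta]
    field_simp
  | succ j ih =>
    rw [prod_range_succ, ih, beta]
    push_cast
    field_simp
    ring

theorem sum_range_inv_mul_three (x : ℝ) (hx : 0 ≤ x) (t : ℕ) :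
    ∑ j ∈ range t, 1 / ((x + j + 1) * (x + j + 2) * (x + j + 3)) =
      1 / (2 * (x + 1) * (x + 2)) - 1 / (2 * (x + t + 1) * (x + t + 2)) := by
  induction t with
  | zero => simp
  | succ t ih =>
    rw [sum_range_succ, ih]
    push_cast
    field_simp
    ring

theorem sigma2_add_add_one (m t : ℕ) :
    sigma2 (m + t + 1) t =
      t - m / 2 + m * (m + 1) * (m + 2) / (2 * ((m : ℝ) + t + 1) * (m + t + 2)) := by
  have hm : m + t + 1 - t - 1 = m := by omega
  have hterm : ∀ j ∈ range t,
      aseq (m + j) * ((t : ℝ) - j) * ∏ i ∈ range j, beta (m + i) =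
        ((t : ℝ) - j) *
          (∏ i ∈ range j, beta (m + i) - ∏ i ∈ range (j + 1), beta (m + i)) := by
    intro j _
    rw [← aseq_mul_prod_beta]
    ring
  have htail : ∑ j ∈ range t, ∏ i ∈ range (j + 1), beta (m + i) =
      m * (m + 1) * (m + 2) *
        ∑ j ∈ range t, 1 / (((m : ℝ) + j + 1) * (m + j + 2) * (m + j + 3)) := by
    rw [mul_sum]
    refine sum_congr rfl fun j _ => ?_
    rw [prod_range_succ_beta]
    ring
  rw [sigma2, hm, sum_congr rfl hterm, sum_range_sub_mul_sub_succ, htail,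
    sum_range_inv_mul_three _ m.cast_nonneg]
  simp only [range_zero, prod_empty, mul_one]
  field_simp
  ring

theorem sq_div_le_of_nonneg (x y : ℝ) (hx : 0 ≤ x) (hy : 0 ≤ y) :
    y ^ 2 / (x + y + 3) ≤
      y - x / 2 + x * (x + 1) * (x + 2) / (2 * (x + y + 1) * (x + y + 2)) := by
  rw [← sub_nonneg]
  have hdiff : y - x / 2 + x * (x + 1) * (x + 2) / (2 * (x + y + 1) * (x + y + 2)) -
      y ^ 2 / (x + y + 3) =
      (12 * y + 18 * y ^ 2 + 6 * y ^ 3 + 13 * x * y + 12 * x * y ^ 2 + x * y ^ 3 +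
        3 * x ^ 2 * y + x ^ 2 * y ^ 2) / (2 * (x + y + 1) * (x + y + 2) * (x + y + 3)) := by
    field_simp
    ring
  rw [hdiff]
  positivity

theorem stmt_5_general (k t : ℕ) (ht2 : t ≤ k - 2) :
    (t : ℝ) ^ 2 / ((k : ℝ) + 2) ≤ sigma2 k t := by
  rcases Nat.eq_zero_or_pos t with rfl | ht
  · simp [sigma2]
  obtain ⟨m, rfl⟩ : ∃ m, k = m + t + 1 := ⟨k - t - 1, by omega⟩
  rw [sigma2_add_add_one]
  convert sq_div_le_of_nonneg m t m.cast_nonneg t.cast_nonneg using 2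
  push_cast
  ring

theorem stmt_5 (k t : ℕ) (hk : 3 ≤ k) (ht1 : 1 ≤ t) (ht2 : t ≤ k - 2) :
    (t : ℝ) ^ 2 / ((k : ℝ) + 2) ≤ sigma2 k t :=
  stmt_5_general k t ht2
end

section
/- Define β_k = k/(k+3), B(k) = [[1+β_{k-1}, -β_{k-1}], [1, 0]], and for 0 ≤ t ≤ k-2 let 𝓑(k,t) = B(k)·B(k-1)···B(k-t), with 𝓑(k,k-1) = I. Then for all integers k ≥ 1 and 0 ≤ t ≤ k-1, the spectral (operator 2-) norm satisfies ‖𝓑(k, k-t-2)‖ ≤ 8·(k-t-1)·(t+1)/k + 5. -/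
/-!
The product `B(p+m+1) ⋯ B(p+1)` of `m + 1` factors has rows `(1 + s(m+1), -s(m+1))` and
`(1 + s(m), -s(m))`, where `s = bprodCoeff p`: appending the factor `B(p+1)` on the right turns the
coefficients for `p + 1` into those for `p` via `s_p(m+1) = β_p (1 + s_{p+1}(m))`. Then
`0 ≤ s_p(m) ≤ p m / (p + m + 1)`, and the operator norm is at most the Frobenius norm.
-/

open scoped Matrix.Norms.L2Operator

noncomputable def Bmat (k : ℕ) : Matrix (Fin 2) (Fin 2) ℝ :=
  !![1 + beta (k - 1), -beta (k - 1); 1, 0]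

/-- `Bprod k m` is the ordered product `B(k) B(k-1) ⋯ B(k-m+1)` of `m` factors, so that
`𝓑(k,t) = Bprod k (t+1)` and `𝓑(k,-1) = Bprod k 0 = I`. In particular
`𝓑(k, k-t-2) = Bprod k (k-t-1)`. -/
noncomputable def Bprod (k m : ℕ) : Matrix (Fin 2) (Fin 2) ℝ :=
  ((List.range m).map (fun j => Bmat (k - j))).prod

theorem Matrix.l2_opNorm_le_sqrt_sum_sq {𝕜 m n : Type*} [RCLike 𝕜] [Fintype m] [Fintype n]
    [DecidableEq n] (A : Matrix m n 𝕜) : ‖A‖ ≤ √(∑ i, ∑ j, ‖A i j‖ ^ 2) := by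
  refine ContinuousLinearMap.opNorm_le_bound _ (by positivity) fun x => ?_
  have row_le (i : m) : ‖∑ j, A i j * x j‖ ^ 2 ≤ (∑ j, ‖A i j‖ ^ 2) * ∑ j, ‖x j‖ ^ 2 :=
    calc ‖∑ j, A i j * x j‖ ^ 2 ≤ (∑ j, ‖A i j‖ * ‖x j‖) ^ 2 := by
          gcongr; exact (norm_sum_le _ _).trans_eq (by simp only [norm_mul])
      _ ≤ _ := Finset.sum_mul_sq_le_sq_mul_sq _ _ _
  rw [EuclideanSpace.norm_eq, EuclideanSpace.norm_eq, ← Real.sqrt_mul (by positivity),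
    Finset.sum_mul]
  gcongr with i
  simpa [Matrix.mulVec, dotProduct] using row_le i

theorem Bmat_succ (p : ℕ) : Bmat (p + 1) = !![1 + beta p, -beta p; 1, 0] := rfl

theorem Bprod_zero (k : ℕ) : Bprod k 0 = 1 := rfl

theorem Bprod_succ (k m : ℕ) : Bprod k (m + 1) = Bprod k m * Bmat (k - m) := by
  rw [Bprod, List.range_succ, List.map_append, List.prod_append, List.map_singleton,
    List.prod_singleton, Bprod]

/-- `∑_{j=1}^{m} β_p β_{p+1} ⋯ β_{p+j-1}` in closed form: the summands
`p (p+1) (p+2) / ((p+j) (p+j+1) (p+j+2))` telescope. -/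
noncomputable def bprodCoeff (p m : ℕ) : ℝ :=
  p * m * (m + 2 * p + 3) / (2 * ((p + m + 1) * (p + m + 2)))

theorem bprodCoeff_zero (p : ℕ) : bprodCoeff p 0 = 0 := by simp [bprodCoeff]

theorem bprodCoeff_succ (p m : ℕ) :
    bprodCoeff p (m + 1) = beta p * (1 + bprodCoeff (p + 1) m) := by
  simp only [bprodCoeff, beta]
  push_cast
  field_simp
  ring

theorem bprodCoeff_nonneg (p m : ℕ) : 0 ≤ bprodCoeff p m := by
  unfold bprodCoeff; positivity

theorem bprodCoeff_le (p m : ℕ) : bprodCoeff p m ≤ p * m / (p + m + 1) := by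
  rw [bprodCoeff, div_le_div_iff₀ (by positivity) (by positivity)]
  have : (0 : ℝ) ≤ p * m * (p + m + 1) * (m + 1) := by positivity
  nlinarith

theorem Bprod_add_succ (p m : ℕ) :
    Bprod (p + (m + 1)) (m + 1) =
      !![1 + bprodCoeff p (m + 1), -bprodCoeff p (m + 1); 1 + bprodCoeff p m, -bprodCoeff p m] := by
  induction m generalizing p with
  | zero =>
    simp [Bprod_succ, Bprod_zero, Bmat_succ, bprodCoeff_succ, bprodCoeff_zero]
  | succ m ih =>
    rw [Bprod_succ, show p + (m + 1 + 1) = p + 1 + (m + 1) by ring, ih,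
      show p + 1 + (m + 1) - (m + 1) = p + 1 by omega, Bmat_succ, Matrix.mul_fin_two,
      bprodCoeff_succ p (m + 1), bprodCoeff_succ p m]
    simp only [EmbeddingLike.apply_eq_iff_eq, Matrix.vecCons_inj, and_true]
    refine ⟨⟨?_, ?_⟩, ?_, ?_⟩ <;> ring

theorem norm_Bprod_add_le (p m : ℕ) : ‖Bprod (p + m) m‖ ≤ 8 * m * p / (p + m) + 5 := by
  rcases m with _ | m
  · rw [Bprod_zero, norm_one]; simp
  generalize hR : (p : ℝ) * (m + 1) / (p + m + 1) = R
  have hu : bprodCoeff p (m + 1) ≤ R := by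
    rw [← hR]; refine (bprodCoeff_le p (m + 1)).trans ?_
    push_cast; gcongr; linarith
  have hv : bprodCoeff p m ≤ R := by
    rw [← hR]; refine (bprodCoeff_le p m).trans ?_
    gcongr; linarith
  have := bprodCoeff_nonneg p (m + 1)
  have := bprodCoeff_nonneg p m
  have hRHS : 8 * ((m + 1 : ℕ) : ℝ) * p / (p + (m + 1 : ℕ)) = 8 * R := by
    rw [← hR]; push_cast; ring
  rw [hRHS]
  refine (Matrix.l2_opNorm_le_sqrt_sum_sq _).trans (Real.sqrt_le_iff.mpr ⟨by linarith, ?_⟩)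
  simp only [Bprod_add_succ, Matrix.of_apply, Matrix.cons_val', Matrix.cons_val_fin_one,
    Real.norm_eq_abs, sq_abs, Fin.sum_univ_two, Fin.isValue, Matrix.cons_val_zero,
    Matrix.cons_val_one, even_two, Even.neg_pow]
  nlinarith

theorem stmt_8 (k t : ℕ) (hk : 1 ≤ k) (ht : t ≤ k - 1) :
    ‖Bprod k (k - t - 1)‖ ≤ 8 * ((k : ℝ) - t - 1) * (t + 1) / k + 5 := by
  obtain ⟨m, rfl⟩ : ∃ m, k = t + 1 + m := ⟨k - t - 1, by omega⟩
  rw [show t + 1 + m - t - 1 = m by omega]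
  convert norm_Bprod_add_le (t + 1) m using 3 <;> push_cast <;> ring
end

section
/- Let (c_t)_{t≥1} be nonnegative reals with c_t ≤ 1/t³ for all t ≥ 1. Then for any k ≥ 1, ∑_{t=0}^{k-1} (8(t+1) + 5) · ∏_{j=t+1}^{k} c_j ≤ 50/k², where ∏_{j=t+1}^{k} c_j ≤ 1/(k³(k-1)³···(t+1)³). -/
/-!
Writing `S k` for the left-hand side, peeling off the factor `c (k + 1)` gives the recursion
`S (k + 1) = (S k + 8 (k + 1) + 5) * c (k + 1)`. If `S k ≤ 50 / k ^ 2` then `S k ≤ 50`, and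
`50 + 8 (k + 1) + 5 ≤ 50 (k + 1)` for `k ≥ 1`, so `S (k + 1) ≤ 50 (k + 1) / (k + 1) ^ 3`.
For `k = 0` both sides vanish, because `50 / 0 = 0` in Lean.
-/

open Finset

theorem sum_range_succ_mul_prod_Icc {R : Type*} [CommSemiring R] (f g : ℕ → R) (k : ℕ) :
    ∑ t ∈ range (k + 1), f t * ∏ j ∈ Icc (t + 1) (k + 1), g j
      = (∑ t ∈ range k, f t * ∏ j ∈ Icc (t + 1) k, g j + f k) * g (k + 1) := by
  rw [sum_range_succ, Icc_self, prod_singleton, add_mul, sum_mul]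
  congr 1
  refine sum_congr rfl fun t ht => ?_
  rw [prod_Icc_succ_top (by simp at ht; omega), mul_assoc]

theorem add_le_mul_succ_of_le_div_sq {s : ℝ} (k : ℕ) (hs : s ≤ 50 / (k : ℝ) ^ 2) :
    s + (8 * ((k : ℝ) + 1) + 5) ≤ 50 * ((k : ℝ) + 1) := by
  rcases Nat.eq_zero_or_pos k with rfl | hk
  · norm_num at hs ⊢
    linarith
  · have hk : (1 : ℝ) ≤ k := by exact_mod_cast hk
    have hs50 : s ≤ 50 := hs.trans (div_le_self (by norm_num) (one_le_pow₀ hk))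
    linarith

theorem stmt_16_general (c : ℕ → ℝ) (hc0 : ∀ t, 0 ≤ c t)
    (hc : ∀ t, 1 ≤ t → c t ≤ 1 / (t : ℝ) ^ 3) (k : ℕ) :
    ∑ t ∈ Finset.range k, (8 * ((t : ℝ) + 1) + 5) * ∏ j ∈ Finset.Icc (t + 1) k, c j
      ≤ 50 / (k : ℝ) ^ 2 := by
  induction k with
  | zero => simp
  | succ k ih =>
    have hck : c (k + 1) ≤ 1 / ((k : ℝ) + 1) ^ 3 := by exact_mod_cast hc (k + 1) k.succ_pos
    rw [sum_range_succ_mul_prod_Icc]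
    calc _ ≤ 50 * ((k : ℝ) + 1) * (1 / ((k : ℝ) + 1) ^ 3) :=
          mul_le_mul (add_le_mul_succ_of_le_div_sq k ih) hck (hc0 _) (by positivity)
      _ = 50 / ((k + 1 : ℕ) : ℝ) ^ 2 := by
          push_cast
          field_simp

theorem stmt_16 (c : ℕ → ℝ) (hc0 : ∀ t, 0 ≤ c t)
    (hc : ∀ t, 1 ≤ t → c t ≤ 1 / (t : ℝ) ^ 3) (k : ℕ) (hk : 1 ≤ k) :
    ∑ t ∈ Finset.range k, (8 * ((t : ℝ) + 1) + 5) * ∏ j ∈ Finset.Icc (t + 1) k, c j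
      ≤ 50 / (k : ℝ) ^ 2 :=
  stmt_16_general c hc0 hc k
end

section
/- Let f_1, ..., f_N : ℝ^d → ℝ be convex differentiable functions with L-Lipschitz gradients, and let f = ∑_i f_i. Fix points y_1, ..., y_N ∈ ℝ^d with average ȳ = (1/N)∑_i y_i. Define f̂ = ∑_i [f_i(y_i) + ∇f_i(y_i)ᵀ(ȳ - y_i)] and ĝ = ∑_i ∇f_i(y_i). Then for every x ∈ ℝ^d: f̂ + ĝᵀ(x - ȳ) ≤ f(x) ≤ f̂ + ĝᵀ(x - ȳ) + (N·L/2)‖x - ȳ‖² + L·∑_{i=1}^N ‖y_i - ȳ‖², provided N/α ≥ 2NL with α ≤ 1/(2L) (i.e., with inexact-oracle constants L' = N/α ≥ 2NL and δ = L·∑_i‖y_i - ȳ‖²). -/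
open scoped RealInnerProductSpace BigOperators

/-!
Summing the first-order convexity inequalities f_i(x) ≥ f_i(y_i) + ⟪∇f_i(y_i), x - y_i⟫ gives the
lower bound, and summing the descent inequalities (the same plus (L/2)‖x - y_i‖²) gives the upper
one. Recentering every linearization at ȳ turns their sum into f̂ + ⟪ĝ, x - ȳ⟫, and because the
deviations y_i - ȳ sum to zero, ∑ ‖x - y_i‖² = N ‖x - ȳ‖² + ∑ ‖y_i - ȳ‖².
-/

open Finset Set

section FirstOrder

variable {E : Type*} [NormedAddCommGroup E] [NormedSpace ℝ E] {f : E → ℝ}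

theorem hasDerivAt_comp_lineMap {f' : E →L[ℝ] ℝ} {x y : E} {t : ℝ}
    (hf : HasFDerivAt f f' (AffineMap.lineMap y x t)) :
    HasDerivAt (fun s : ℝ => f (AffineMap.lineMap y x s)) (f' (x - y)) t := by
  have hline : HasDerivAt (fun s : ℝ => AffineMap.lineMap y x s) (x - y) t := by
    simpa [AffineMap.lineMap_apply_module'] using
      ((hasDerivAt_id t).smul_const (x - y)).add_const y
  exact hf.comp_hasDerivAt t hline

theorem ConvexOn.add_apply_sub_le_of_hasFDerivAt {s : Set E} {f' : E →L[ℝ] ℝ} {x y : E}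
    (hf : ConvexOn ℝ s f) (hx : x ∈ s) (hy : y ∈ s) (hd : HasFDerivAt f f' y) :
    f y + f' (x - y) ≤ f x := by
  have hφ := hf.comp_affineMap (AffineMap.lineMap y x)
  have hderiv := hasDerivAt_comp_lineMap (x := x) (t := 0) (by simpa using hd)
  have := hφ.le_slope_of_hasDerivAt (x := 0) (y := 1) (by simpa using hy) (by simpa using hx)
    one_pos hderiv
  simp only [slope_def_field, Function.comp_apply, AffineMap.lineMap_apply_one,
    AffineMap.lineMap_apply_zero, sub_zero, div_one] at this
  linarith

theorem le_add_apply_sub_add_sq_of_lipschitz {f' : E → E →L[ℝ] ℝ} {L : ℝ}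
    (hd : ∀ z, HasFDerivAt f (f' z) z) (hlip : ∀ a b, ‖f' a - f' b‖ ≤ L * ‖a - b‖) (x y : E) :
    f x ≤ f y + f' y (x - y) + L / 2 * ‖x - y‖ ^ 2 := by
  -- The Lipschitz bound makes `g` nonincreasing on `[0, ∞)`, and `g 1 ≤ g 0` is the claim.
  set g : ℝ → ℝ := fun t => f (AffineMap.lineMap y x t) - t * f' y (x - y)
    - L / 2 * t ^ 2 * ‖x - y‖ ^ 2
  have hg : ∀ t, HasDerivAt g (f' (AffineMap.lineMap y x t) (x - y) - f' y (x - y)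
      - L * t * ‖x - y‖ ^ 2) t := by
    intro t
    have hline := hasDerivAt_comp_lineMap (x := x) (y := y) (hd (AffineMap.lineMap y x t))
    have hquad := ((hasDerivAt_pow 2 t).const_mul (L / 2)).mul_const (‖x - y‖ ^ 2)
    exact ((hline.sub ((hasDerivAt_id t).mul_const (f' y (x - y)))).sub hquad).congr_deriv
      (by ring)
  have hg' : ∀ t, 0 ≤ t → f' (AffineMap.lineMap y x t) (x - y) - f' y (x - y)
      ≤ L * t * ‖x - y‖ ^ 2 := by
    intro t ht
    calc f' (AffineMap.lineMap y x t) (x - y) - f' y (x - y)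
        = (f' (AffineMap.lineMap y x t) - f' y) (x - y) := rfl
      _ ≤ ‖f' (AffineMap.lineMap y x t) - f' y‖ * ‖x - y‖ :=
        (le_abs_self _).trans ((f' _ - f' y).le_opNorm _)
      _ ≤ L * ‖AffineMap.lineMap y x t - y‖ * ‖x - y‖ := by gcongr; exact hlip _ _
      _ = L * t * ‖x - y‖ ^ 2 := by
        rw [AffineMap.lineMap_apply_module', add_sub_cancel_right, norm_smul,
          Real.norm_of_nonneg ht]
        ring
  have hanti : AntitoneOn g (Ici 0) :=
    antitoneOn_of_hasDerivWithinAt_nonpos (convex_Ici 0)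
      (HasDerivAt.continuousOn fun t _ => hg t) (fun t _ => (hg t).hasDerivWithinAt)
      (fun t ht => by rw [interior_Ici] at ht; linarith [hg' t (le_of_lt ht)])
  have := hanti self_mem_Ici (mem_Ici.2 zero_le_one) zero_le_one
  simp only [g, AffineMap.lineMap_apply_one, AffineMap.lineMap_apply_zero, one_mul, one_pow,
    mul_one, zero_mul, sub_zero, zero_pow two_ne_zero, mul_zero] at this
  linarith

end FirstOrder

section Gradient

variable {F : Type*} [NormedAddCommGroup F] [InnerProductSpace ℝ F] [CompleteSpace F] {f : F → ℝ}

theorem ConvexOn.add_inner_sub_le_of_hasGradientAt {s : Set F} {g x y : F} (hf : ConvexOn ℝ s f)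
    (hx : x ∈ s) (hy : y ∈ s) (hg : HasGradientAt f g y) : f y + ⟪g, x - y⟫ ≤ f x :=
  hf.add_apply_sub_le_of_hasFDerivAt hx hy hg.hasFDerivAt

theorem le_add_inner_gradient_sub_add_sq {L : ℝ} (hf : Differentiable ℝ f)
    (hlip : ∀ a b, ‖gradient f a - gradient f b‖ ≤ L * ‖a - b‖) (x y : F) :
    f x ≤ f y + ⟪gradient f y, x - y⟫ + L / 2 * ‖x - y‖ ^ 2 :=
  le_add_apply_sub_add_sq_of_lipschitz (fun z => (hf z).hasGradientAt.hasFDerivAt)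
    (fun a b => by rw [← map_sub, LinearIsometryEquiv.norm_map]; exact hlip a b) x y

end Gradient

theorem sum_sub_inv_card_smul_sum {ι 𝕜 E : Type*} [Fintype ι] [DivisionRing 𝕜] [CharZero 𝕜]
    [AddCommGroup E] [Module 𝕜 E] (y : ι → E) :
    ∑ i, (y i - (Fintype.card ι : 𝕜)⁻¹ • ∑ j, y j) = 0 := by
  rcases isEmpty_or_nonempty ι with hι | hι
  · simp
  · rw [sum_sub_distrib, sum_const, card_univ, ← Nat.cast_smul_eq_nsmul 𝕜, smul_smul,
      mul_inv_cancel₀ (Nat.cast_ne_zero.2 Fintype.card_ne_zero), one_smul, sub_self]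

theorem sum_norm_sub_sq_of_sum_sub_eq_zero {ι F : Type*} [Fintype ι] [NormedAddCommGroup F]
    [InnerProductSpace ℝ F] {y : ι → F} {c : F} (hc : ∑ i, (y i - c) = 0) (x : F) :
    ∑ i, ‖x - y i‖ ^ 2 = Fintype.card ι * ‖x - c‖ ^ 2 + ∑ i, ‖y i - c‖ ^ 2 := by
  have hterm : ∀ i, ‖x - y i‖ ^ 2 = ‖x - c‖ ^ 2 - 2 * ⟪x - c, y i - c⟫ + ‖y i - c‖ ^ 2 := by
    intro i
    rw [← norm_sub_sq_real, sub_sub_sub_cancel_right]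
  simp_rw [hterm, sum_add_distrib, sum_sub_distrib, ← mul_sum, ← inner_sum, hc, inner_zero_right,
    sum_const, card_univ, nsmul_eq_mul]
  ring

theorem stmt_18_general (d N : ℕ)
    (f : Fin N → EuclideanSpace ℝ (Fin d) → ℝ) (L : ℝ) (hL : 0 < L)
    (hconv : ∀ i, ConvexOn ℝ Set.univ (f i))
    (hdiff : ∀ i, Differentiable ℝ (f i))
    (hlip : ∀ i, ∀ x y, ‖gradient (f i) x - gradient (f i) y‖ ≤ L * ‖x - y‖)
    (y : Fin N → EuclideanSpace ℝ (Fin d))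
    (ybar : EuclideanSpace ℝ (Fin d)) (hybar : ybar = (N : ℝ)⁻¹ • ∑ i, y i)
    (fhat : ℝ) (hfhat : fhat = ∑ i, (f i (y i) + ⟪gradient (f i) (y i), ybar - y i⟫))
    (ghat : EuclideanSpace ℝ (Fin d)) (hghat : ghat = ∑ i, gradient (f i) (y i)) :
    ∀ x : EuclideanSpace ℝ (Fin d),
      fhat + ⟪ghat, x - ybar⟫ ≤ ∑ i, f i x ∧
      ∑ i, f i x ≤ fhat + ⟪ghat, x - ybar⟫ + (N * L / 2) * ‖x - ybar‖ ^ 2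
        + L * ∑ i, ‖y i - ybar‖ ^ 2 := by
  intro x
  have hlin : fhat + ⟪ghat, x - ybar⟫ = ∑ i, (f i (y i) + ⟪gradient (f i) (y i), x - y i⟫) := by
    rw [hfhat, hghat, sum_inner, ← sum_add_distrib]
    refine sum_congr rfl fun i _ => ?_
    rw [add_assoc, ← inner_add_right, sub_add_sub_cancel']
  have hspread : ∑ i, ‖x - y i‖ ^ 2 = N * ‖x - ybar‖ ^ 2 + ∑ i, ‖y i - ybar‖ ^ 2 := by
    have hc : ∑ i, (y i - ybar) = 0 := by
      simpa [hybar] using sum_sub_inv_card_smul_sum (𝕜 := ℝ) y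
    simpa using sum_norm_sub_sq_of_sum_sub_eq_zero hc x
  refine ⟨hlin ▸ sum_le_sum fun i _ =>
    (hconv i).add_inner_sub_le_of_hasGradientAt trivial trivial (hdiff i (y i)).hasGradientAt, ?_⟩
  calc ∑ i, f i x
      ≤ ∑ i, (f i (y i) + ⟪gradient (f i) (y i), x - y i⟫ + L / 2 * ‖x - y i‖ ^ 2) :=
        sum_le_sum fun i _ => le_add_inner_gradient_sub_add_sq (hdiff i) (hlip i) x (y i)
    _ = fhat + ⟪ghat, x - ybar⟫ + L / 2 * (N * ‖x - ybar‖ ^ 2 + ∑ i, ‖y i - ybar‖ ^ 2) := by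
        rw [sum_add_distrib, ← mul_sum, hlin, hspread]
    _ ≤ _ := by
        have hdev : 0 ≤ ∑ i, ‖y i - ybar‖ ^ 2 := by positivity
        nlinarith

theorem stmt_18 (d N : ℕ) (hN : 1 ≤ N)
    (f : Fin N → EuclideanSpace ℝ (Fin d) → ℝ) (L : ℝ) (hL : 0 < L)
    (hconv : ∀ i, ConvexOn ℝ Set.univ (f i))
    (hdiff : ∀ i, Differentiable ℝ (f i))
    (hlip : ∀ i, ∀ x y, ‖gradient (f i) x - gradient (f i) y‖ ≤ L * ‖x - y‖)
    (y : Fin N → EuclideanSpace ℝ (Fin d))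
    (ybar : EuclideanSpace ℝ (Fin d)) (hybar : ybar = (N : ℝ)⁻¹ • ∑ i, y i)
    (α : ℝ) (hα0 : 0 < α) (hα : α ≤ 1 / (2 * L)) (hα2 : (N : ℝ) / α ≥ 2 * N * L)
    (fhat : ℝ) (hfhat : fhat = ∑ i, (f i (y i) + ⟪gradient (f i) (y i), ybar - y i⟫))
    (ghat : EuclideanSpace ℝ (Fin d)) (hghat : ghat = ∑ i, gradient (f i) (y i)) :
    ∀ x : EuclideanSpace ℝ (Fin d),
      fhat + ⟪ghat, x - ybar⟫ ≤ ∑ i, f i x ∧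
      ∑ i, f i x ≤ fhat + ⟪ghat, x - ybar⟫ + (N * L / 2) * ‖x - ybar‖ ^ 2
        + L * ∑ i, ‖y i - ybar‖ ^ 2 :=
  stmt_18_general d N f L hL hconv hdiff hlip y ybar hybar fhat hfhat ghat hghat
end
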